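/- arXiv:0911.3722 — 2 statements merged into one kernel-verified Lean document; each statement's English description precedes it below -/
import Mathlib

section
/- Every S-complete invariant ideal I on an amenable group G is N-complete; that is, if S_I = I then every subset A ⊆ G satisfying μ(A) = 0 for every Banach measure μ on G with I ⊆ N_μ belongs to I. -/
open scoped Pointwise Topology

/-- A subset `A` of a group `G` is *large* if `F * A = G` for some finite `F ⊆ G`. -/
def IsLarge {G : Type*} [Group G] (A : Set G) : Prop :=
  ∃ F : Finset G, (F : Set G) * A = Set.univ

/-- A subset `A` of a group `G` is *small* if `B \ A` is large for every large `B ⊆ G`. -/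
def IsSmallSet {G : Type*} [Group G] (A : Set G) : Prop :=
  ∀ B : Set G, IsLarge B → IsLarge (B \ A)

/-- A translation-invariant ideal on a group `G`: a proper family of subsets of `G`
containing the empty set, closed under subsets, finite unions and left translations. -/
structure IsInvariantIdeal (G : Type*) [Group G] (I : Set (Set G)) : Prop where
  proper : I ≠ Set.univ
  empty_mem : ∅ ∈ I
  subset_mem : ∀ ⦃A B : Set G⦄, A ∈ I → B ⊆ A → B ∈ I
  union_mem : ∀ ⦃A B : Set G⦄, A ∈ I → B ∈ I → A ∪ B ∈ I
  translate_mem : ∀ (x : G) ⦃A : Set G⦄, A ∈ I → (fun a => x * a) '' A ∈ I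

/-- A subset `A ⊆ G` is `I`-large if `G \ FA ∈ I` for some finite `F ⊆ G`. -/
def IsILarge {G : Type*} [Group G] (I : Set (Set G)) (A : Set G) : Prop :=
  ∃ F : Finset G, (Set.univ : Set G) \ ((F : Set G) * A) ∈ I

/-- A subset `A ⊆ G` is `I`-small if `L \ A` is `I`-large for every `I`-large `L ⊆ G`. -/
def IsISmall {G : Type*} [Group G] (I : Set (Set G)) (A : Set G) : Prop :=
  ∀ L : Set G, IsILarge I L → IsILarge I (L \ A)

/-- A *Banach measure* on a group `G`: a finitely additive, left-invariant probability
"measure" defined on all subsets of `G`, with values in `[0,1]`. -/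
structure BanachMeasure (G : Type*) [Group G] where
  toFun : Set G → ℝ
  nonneg : ∀ A : Set G, 0 ≤ toFun A
  le_one : ∀ A : Set G, toFun A ≤ 1
  additive : ∀ A B : Set G, Disjoint A B → toFun (A ∪ B) = toFun A + toFun B
  measure_univ : toFun Set.univ = 1
  invariant : ∀ (x : G) (A : Set G), toFun ((fun a => x * a) '' A) = toFun A

/-- The Følner condition: for every finite `F ⊆ G` and `ε > 0` there is a nonempty finite
`E ⊆ G` with `|E △ xE| < ε·|E|` for all `x ∈ F`.  A group is *amenable* iff it satisfies it. -/
def FolnerCond (G : Type*) [Group G] : Prop :=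
  ∀ (F : Finset G) (ε : ℝ), 0 < ε → ∃ E : Finset G, E.Nonempty ∧
    ∀ x ∈ F, ((symmDiff (E : Set G) ((fun a => x * a) '' (E : Set G))).ncard : ℝ) < ε * E.card

/-! If `A ∉ I`, then `A` is not `I`-small: some `L` with `G \ F L ∈ I` has `L \ A` not
`I`-large. This forces `F A` to be thick modulo `I`: every finite `E` has a right translate
`E g ⊆ F A` avoiding any prescribed member of `I`. Averaging over such translates of Følner sets and passing
to an ultralimit yields a Banach measure vanishing on `I` with `μ (F A) = 1`, whereas `μ A = 0`
gives `μ (F A) ≤ ∑ f ∈ F, μ (f A) = 0`. -/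

section

open Filter Finset

variable {G : Type*} [Group G]

lemma Set.image_mul_left_eq_smul (x : G) (A : Set G) : (x * ·) '' A = x • A :=
  rfl

namespace IsInvariantIdeal

variable {I : Set (Set G)}

lemma smul_mem (hI : IsInvariantIdeal G I) (x : G) {A : Set G} (hA : A ∈ I) : x • A ∈ I := by
  rw [← Set.image_mul_left_eq_smul]
  exact hI.translate_mem x hA

lemma biUnion_mem {ι : Type*} (hI : IsInvariantIdeal G I) (E : Finset ι) {f : ι → Set G}
    (hf : ∀ e ∈ E, f e ∈ I) : (⋃ e ∈ E, f e) ∈ I := by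
  classical
  induction E using Finset.induction_on with
  | empty => simpa using hI.empty_mem
  | insert a E _ ih =>
    rw [Finset.set_biUnion_insert]
    exact hI.union_mem (hf a (mem_insert_self a E))
      (ih fun e he => hf e (mem_insert_of_mem he))

end IsInvariantIdeal

namespace BanachMeasure

variable (μ : BanachMeasure G)

lemma measure_empty : μ.toFun ∅ = 0 := by
  have h := μ.additive ∅ ∅ disjoint_bot_left
  rw [Set.empty_union] at h
  linarith

lemma measure_mono {A B : Set G} (h : A ⊆ B) : μ.toFun A ≤ μ.toFun B := by
  have h' := μ.additive A (B \ A) Set.disjoint_sdiff_right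
  rw [Set.union_sdiff_cancel h] at h'
  linarith [μ.nonneg (B \ A)]

lemma measure_union_le (A B : Set G) : μ.toFun (A ∪ B) ≤ μ.toFun A + μ.toFun B := by
  have h := μ.additive A (B \ A) Set.disjoint_sdiff_right
  rw [Set.union_sdiff_self] at h
  linarith [μ.measure_mono (Set.sdiff_subset (s := B) (t := A))]

lemma measure_biUnion_le {ι : Type*} (E : Finset ι) (f : ι → Set G) :
    μ.toFun (⋃ e ∈ E, f e) ≤ ∑ e ∈ E, μ.toFun (f e) := by
  classical
  induction E using Finset.induction_on with
  | empty => simp [measure_empty]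
  | insert a E ha ih =>
    rw [Finset.set_biUnion_insert, sum_insert ha]
    linarith [μ.measure_union_le (f a) (⋃ e ∈ E, f e)]

lemma measure_finset_mul_eq_zero (F : Finset G) {A : Set G} (hA : μ.toFun A = 0) :
    μ.toFun ((F : Set G) * A) = 0 := by
  refine le_antisymm ?_ (μ.nonneg _)
  calc μ.toFun ((F : Set G) * A) ≤ ∑ f ∈ F, μ.toFun ((f * ·) '' A) := by
        rw [← Set.iUnion_mul_left_image]
        exact μ.measure_biUnion_le F _
    _ = 0 := sum_eq_zero fun f _ => by rw [μ.invariant, hA]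

end BanachMeasure

def IsIThick (I : Set (Set G)) (W : Set G) : Prop :=
  ∀ J ∈ I, ∀ E : Finset G, ∃ g : G, ∀ e ∈ E, e * g ∈ W \ J

lemma isIThick_mul_of_not_isILarge_sdiff {I : Set (Set G)} (hI : IsInvariantIdeal G I)
    {F : Finset G} {L A : Set G} (hF : Set.univ \ ((F : Set G) * L) ∈ I)
    (hLA : ¬ IsILarge I (L \ A)) : IsIThick I ((F : Set G) * A) := by
  classical
  intro J hJ E
  by_contra! hE
  -- Otherwise the translates `e⁻¹ • J₀`, `e ∈ E`, cover the complement of `E⁻¹ F (L \ A)`.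
  set J₀ := (Set.univ \ ((F : Set G) * L)) ∪ J
  refine hLA ⟨E⁻¹ * F, hI.subset_mem
    (hI.biUnion_mem E fun e _ => hI.smul_mem e⁻¹ (hI.union_mem hF hJ)) ?_⟩
  rintro y ⟨-, hy⟩
  obtain ⟨e, he, hey⟩ := hE y
  refine Set.mem_biUnion he (Set.mem_smul_set.2 ⟨e * y, ?_, inv_mul_cancel_left e y⟩)
  by_contra hJ₀
  simp only [Set.mem_union, Set.mem_sdiff, Set.mem_univ, true_and, not_or, not_not] at hJ₀
  obtain ⟨⟨f, hf, l, hl, hfl⟩, hyJ⟩ := hJ₀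
  have hlA : l ∉ A := fun hlA => hey ⟨⟨f, hf, l, hlA, hfl⟩, hyJ⟩
  refine hy ⟨e⁻¹ * f, ?_, l, ⟨hl, hlA⟩, ?_⟩
  · rw [Finset.coe_mul, Finset.coe_inv]
    exact Set.mul_mem_mul (Set.inv_mem_inv.2 he) hf
  · change e⁻¹ * f * l = y
    rw [mul_assoc, show f * l = e * y from hfl, inv_mul_cancel_left]

lemma abs_card_filter_sub_card_filter_le {α : Type*} [DecidableEq α] (s t : Finset α)
    (p : α → Prop) [DecidablePred p] :
    |(#{a ∈ s | p a} : ℝ) - #{a ∈ t | p a}| ≤ #(symmDiff s t) := by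
  have key (s t : Finset α) : (#{a ∈ s | p a} : ℝ) ≤ #{a ∈ t | p a} + #(symmDiff s t) := by
    have hsub : {a ∈ s | p a} ⊆ {a ∈ t | p a} ∪ symmDiff s t := by
      intro a ha
      rw [mem_filter] at ha
      by_cases hat : a ∈ t
      · exact mem_union_left _ (mem_filter.2 ⟨hat, ha.2⟩)
      · exact mem_union_right _ (mem_symmDiff.2 (Or.inl ⟨ha.1, hat⟩))
    exact_mod_cast (card_le_card hsub).trans (card_union_le _ _)
  rw [abs_sub_le_iff]
  constructor
  · linarith [key s t]
  · have h := key t s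
    rw [symmDiff_comm] at h
    linarith

lemma card_filter_smul_finset [DecidableEq G] (x : G) (E : Finset G) (p : G → Prop)
    [DecidablePred p] : #{e ∈ x • E | p e} = #{e ∈ E | p (x * e)} := by
  rw [smul_finset_def, filter_image, card_image_of_injective _ (MulAction.injective x)]
  rfl

open Classical in
noncomputable def folnerMean (E : Finset G) (g : G) (S : Set G) : ℝ :=
  (#{e ∈ E | e * g ∈ S} : ℝ) / #E

section folnerMean

variable (E : Finset G) (g : G)

lemma folnerMean_nonneg (S : Set G) : 0 ≤ folnerMean E g S := by
  unfold folnerMean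
  positivity

lemma folnerMean_le_one (S : Set G) : folnerMean E g S ≤ 1 := by
  classical
  unfold folnerMean
  exact div_le_one_of_le₀ (by exact_mod_cast card_filter_le _ _) (Nat.cast_nonneg _)

lemma folnerMean_union {S T : Set G} (hST : Disjoint S T) :
    folnerMean E g (S ∪ T) = folnerMean E g S + folnerMean E g T := by
  classical
  unfold folnerMean
  rw [← add_div]
  congr 1
  simp only [Set.mem_union]
  rw [filter_or, card_union_of_disjoint
    (disjoint_filter.2 fun e _ hS hT => Set.disjoint_left.1 hST hS hT), Nat.cast_add]

lemma folnerMean_eq_one {E : Finset G} (hE : E.Nonempty) {S : Set G}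
    (h : ∀ e ∈ E, e * g ∈ S) : folnerMean E g S = 1 := by
  classical
  unfold folnerMean
  rw [filter_true_of_mem h]
  exact div_self (by exact_mod_cast hE.card_pos.ne')

lemma folnerMean_eq_zero {S : Set G} (h : ∀ e ∈ E, e * g ∉ S) : folnerMean E g S = 0 := by
  classical
  unfold folnerMean
  rw [filter_false_of_mem h, card_empty, Nat.cast_zero, zero_div]

lemma abs_folnerMean_smul_sub_le [DecidableEq G] (x : G) (S : Set G) :
    |folnerMean E g (x • S) - folnerMean E g S| ≤ #(symmDiff E (x • E)) / #E := by
  classical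
  have hS : #{e ∈ E | e * g ∈ S} = #{e ∈ x • E | e * g ∈ x • S} := by
    rw [card_filter_smul_finset]
    refine congrArg card (filter_congr fun e _ => ?_)
    rw [mul_assoc]
    exact Set.smul_mem_smul_set_iff.symm
  unfold folnerMean
  rw [hS, ← sub_div, abs_div, Nat.abs_cast]
  gcongr
  convert abs_card_filter_sub_card_filter_le E (x • E) (· * g ∈ x • S)

end folnerMean

lemma FolnerCond.exists_card_symmDiff_lt [DecidableEq G] (hG : FolnerCond G) (F : Finset G)
    {ε : ℝ} (hε : 0 < ε) :
    ∃ E : Finset G, E.Nonempty ∧ ∀ x ∈ F, (#(symmDiff E (x • E)) : ℝ) < ε * #E := by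
  obtain ⟨E, hE, hEF⟩ := hG F ε hε
  refine ⟨E, hE, fun x hx => ?_⟩
  have h := hEF x hx
  rwa [Set.image_mul_left_eq_smul, ← coe_smul_finset, ← coe_symmDiff,
    Set.ncard_coe_finset] at h

lemma tendsto_folnerMean_smul_sub {ι : Type*} [DecidableEq G] {l : Filter ι}
    {E : ι → Finset G}
    (hE : ∀ x : G, Tendsto (fun i => (#(symmDiff (E i) (x • E i)) : ℝ) / #(E i)) l (𝓝 0))
    (g : ι → G) (x : G) (S : Set G) :
    Tendsto (fun i => folnerMean (E i) (g i) (x • S) - folnerMean (E i) (g i) S) l (𝓝 0) :=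
  squeeze_zero_norm (fun i => abs_folnerMean_smul_sub_le (E i) (g i) x S) (hE x)

lemma Ultrafilter.exists_forall_tendsto_of_isCompact {ι α X : Type*} [TopologicalSpace X]
    (U : Ultrafilter ι) {K : Set X} (hK : IsCompact K) (ν : ι → α → X)
    (hν : ∀ i a, ν i a ∈ K) : ∃ m : α → X, ∀ a, Tendsto (ν · a) U (𝓝 (m a)) := by
  choose m _ hm using fun a => hK.ultrafilter_le_nhds (U.map (ν · a))
    (le_principal_iff.2 (mem_map.2 (univ_mem' (hν · a))))
  exact ⟨m, hm⟩

lemma BanachMeasure.exists_toFun_eq_of_tendsto {ι : Type*} {l : Filter ι} [l.NeBot]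
    {ν : ι → Set G → ℝ} {m : Set G → ℝ} (hm : ∀ S, Tendsto (ν · S) l (𝓝 (m S)))
    (h0 : ∀ i S, 0 ≤ ν i S) (h1 : ∀ i S, ν i S ≤ 1)
    (hadd : ∀ i S T, Disjoint S T → ν i (S ∪ T) = ν i S + ν i T)
    (huniv : ∀ i, ν i Set.univ = 1)
    (hinv : ∀ (x : G) S, Tendsto (fun i => ν i (x • S) - ν i S) l (𝓝 0)) :
    ∃ μ : BanachMeasure G, μ.toFun = m := by
  refine ⟨⟨m, fun S => ge_of_tendsto' (hm S) (h0 · S),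
    fun S => le_of_tendsto' (hm S) (h1 · S), fun S T hST => ?_, ?_, fun x S => ?_⟩, rfl⟩
  · exact tendsto_nhds_unique (hm _) (((hm S).add (hm T)).congr fun i => (hadd i S T hST).symm)
  · exact tendsto_nhds_unique (hm _) (tendsto_const_nhds.congr fun i => (huniv i).symm)
  · rw [Set.image_mul_left_eq_smul, ← sub_eq_zero]
    exact tendsto_nhds_unique ((hm _).sub (hm S)) (hinv x S)

lemma exists_banachMeasure_of_isIThick (hG : FolnerCond G) {I : Set (Set G)}
    (hI : IsInvariantIdeal G I) {W : Set G} (hW : IsIThick I W) :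
    ∃ μ : BanachMeasure G, (∀ B ∈ I, μ.toFun B = 0) ∧ μ.toFun W = 1 := by
  classical
  -- An index `(J, F, n)` asks for a `(F, 1 / (n + 1))`-Følner set `E` and a translate `E * g`
  -- inside `W \ J`; the Banach measure is an ultralimit of the proportions of `E * g`.
  let Λ := {J // J ∈ I} × Finset G × ℕ
  let : SemilatticeSup {J // J ∈ I} := Subtype.semilatticeSup fun _ _ hA hB => hI.union_mem hA hB
  have : Nonempty Λ := ⟨(⟨∅, hI.empty_mem⟩, ∅, 0)⟩
  choose E hE hEfol using fun p : Λ => hG.exists_card_symmDiff_lt p.2.1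
    (Nat.one_div_pos_of_nat (n := p.2.2))
  choose g hg using fun p : Λ => hW p.1 p.1.2 (E p)
  let U : Ultrafilter Λ := .of atTop
  have hU : (U : Filter Λ) ≤ atTop := Ultrafilter.of_le atTop
  have hfolner (x : G) :
      Tendsto (fun p => (#(symmDiff (E p) (x • E p)) : ℝ) / #(E p)) U (𝓝 0) := by
    have hn : Tendsto (fun p : Λ => (1 : ℝ) / (p.2.2 + 1)) atTop (𝓝 0) :=
      tendsto_one_div_add_atTop_nhds_zero_nat.comp (tendsto_atTop_atTop_of_monotone
        (fun p q h => h.2.2) fun n => ⟨(⟨∅, hI.empty_mem⟩, ∅, n), le_rfl⟩)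
    refine squeeze_zero' (Eventually.of_forall fun p => by positivity) ?_ (hn.mono_left hU)
    filter_upwards [hU (eventually_ge_atTop ((⟨∅, hI.empty_mem⟩, {x}, 0) : Λ))] with p hp
    rw [div_le_iff₀ (by exact_mod_cast (hE p).card_pos)]
    exact (hEfol p x (hp.2.1 (mem_singleton_self x))).le
  obtain ⟨m, hm⟩ := U.exists_forall_tendsto_of_isCompact isCompact_Icc
    (fun p => folnerMean (E p) (g p))
    fun p S => ⟨folnerMean_nonneg _ _ S, folnerMean_le_one _ _ S⟩
  obtain ⟨μ, rfl⟩ := BanachMeasure.exists_toFun_eq_of_tendsto hm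
    (fun p => folnerMean_nonneg _ _) (fun p => folnerMean_le_one _ _)
    (fun p _ _ => folnerMean_union _ _)
    (fun p => folnerMean_eq_one _ (hE p) fun _ _ => Set.mem_univ _)
    (tendsto_folnerMean_smul_sub hfolner g)
  refine ⟨μ, fun B hB => tendsto_nhds_unique (hm B) ?_, tendsto_nhds_unique (hm W) ?_⟩
  · refine tendsto_const_nhds.congr' ?_
    filter_upwards [hU (eventually_ge_atTop ((⟨B, hB⟩, ∅, 0) : Λ))] with p hp
    exact (folnerMean_eq_zero _ _ fun e he heB => (hg p e he).2 (hp.1 heB)).symm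
  · exact tendsto_const_nhds.congr fun p =>
      (folnerMean_eq_one _ (hE p) fun e he => (hg p e he).1).symm

end

/-- Every `S`-complete invariant ideal on an amenable group is `N`-complete: if `S_I = I`,
then every set which is `μ`-null for every Banach measure `μ` annihilating `I` lies in `I`. -/
theorem sComplete_implies_nComplete {G : Type*} [Group G] (hG : FolnerCond G)
    (I : Set (Set G)) (hI : IsInvariantIdeal G I)
    (hS : {A : Set G | IsISmall I A} = I) :
    ∀ A : Set G,
      (∀ μ : BanachMeasure G, (∀ B ∈ I, μ.toFun B = 0) → μ.toFun A = 0) → A ∈ I := by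
  intro A hnull
  by_contra hA
  have hAS : ¬ IsISmall I A := fun h => hA (hS ▸ h)
  simp only [IsISmall, not_forall] at hAS
  obtain ⟨L, ⟨F, hF⟩, hLA⟩ := hAS
  obtain ⟨μ, hμI, hμW⟩ :=
    exists_banachMeasure_of_isIThick hG hI (isIThick_mul_of_not_isILarge_sdiff hI hF hLA)
  exact one_ne_zero (hμW.symm.trans (μ.measure_finset_mul_eq_zero F (hnull μ hμI)))
end

section
/- If a group G contains a subgroup isomorphic to the free group F_2 on two generators, then no invariant ideal on G is pack_2-complete; in particular, the ideal S of small subsets of G is not pack_2-complete. -/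
open scoped Pointwise Topology

/-- An invariant ideal `I` on `G` is `pack₂`-complete if `A ∈ I` for every `A ⊆ G` such that
for each `m ∈ ℕ` there is `B ⊆ G` with `|B| = m` and `bA ∩ b'A ∈ I` for all distinct
`b, b' ∈ B`. -/
def Pack2Complete {G : Type*} [Group G] (I : Set (Set G)) : Prop :=
  ∀ A : Set G,
    (∀ m : ℕ, ∃ B : Finset G, B.card = m ∧
      ∀ b ∈ B, ∀ b' ∈ B, b ≠ b' →
        ((fun a => b * a) '' A) ∩ ((fun a => b' * a) '' A) ∈ I) →
    A ∈ I


/-!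
Through an injective `φ : F₂ →* G`, every `g : G` gets a coordinate `w g : F₂` with
`w (φ u * g) = u * w g` (read off a transversal of the right cosets of `φ(F₂)`). Let `A` be the set
of `g` whose coordinate is a reduced word starting with `a` or `a⁻¹`. Multiplying a reduced word not
starting with `b⁻¹` by `bⁿ` (`n > 0`) gives a reduced word starting with `b`, so the translates of
`A` by the powers of `φ b` are pairwise disjoint, and likewise the translates of `Aᶜ` by the
powers of `φ a`. A `pack₂`-complete ideal therefore contains both `A` and `Aᶜ`, hence everything.
-/

namespace FreeGroup

variable {α : Type*} [DecidableEq α]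

theorem of_pow_succ_mul_mem_startsWith {i : α} {g : FreeGroup α}
    (hg : g ∉ startsWith (i, false)) (n : ℕ) : of i ^ (n + 1) * g ∈ startsWith (i, true) := by
  induction n with
  | zero => rw [zero_add, pow_one]; exact startsWith_mk_mul (w := (i, true)) g hg
  | succ n ih =>
    rw [pow_succ', mul_assoc]
    exact startsWith_mk_mul (w := (i, true)) _
      ((startsWith.disjoint_iff_ne.2 (by simp)).notMem_of_mem_left ih)

theorem disjoint_of_pow_succ_smul {S : Set (FreeGroup α)} {i : α}
    (hS : ∀ b, Disjoint S (startsWith (i, b))) (n : ℕ) : Disjoint S (of i ^ (n + 1) • S) := by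
  refine Set.disjoint_left.2 ?_
  rintro x hx ⟨g, hg, rfl⟩
  exact (hS true).notMem_of_mem_left hx
    (of_pow_succ_mul_mem_startsWith ((hS false).notMem_of_mem_left hg) n)

end FreeGroup

section Translates

variable {G H : Type*} [Group G] [Group H]

theorem MonoidHom.exists_map_mul_eq_mul {φ : H →* G} (hφ : Function.Injective φ) :
    ∃ w : G → H, ∀ u g, w (φ u * g) = u * w g := by
  obtain ⟨T, hT, -⟩ := Subgroup.exists_isComplement_right φ.range 1
  let e := MonoidHom.ofInjective hφ
  refine ⟨fun g => e.symm (hT.equiv g).1, fun u g => ?_⟩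
  show e.symm (hT.equiv ((e u : G) * g)).1 = u * e.symm (hT.equiv g).1
  rw [hT.equiv_mul_left, map_mul, MulEquiv.symm_apply_apply]

theorem disjoint_preimage_smul {φ : H →* G} {w : G → H} (hw : ∀ u g, w (φ u * g) = u * w g)
    {S : Set H} {u : H} (h : Disjoint S (u • S)) : Disjoint (w ⁻¹' S) (φ u • w ⁻¹' S) := by
  refine (h.preimage w).mono_right ?_
  rintro _ ⟨g, hg, rfl⟩
  exact ⟨w g, hg, (hw u g).symm⟩

theorem exists_card_eq_pairwise_disjoint_pow_smul {t : G} (ht : ¬IsOfFinOrder t) {A : Set G}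
    (hA : ∀ n : ℕ, Disjoint A (t ^ (n + 1) • A)) (m : ℕ) :
    ∃ B : Finset G, B.card = m ∧ (B : Set G).Pairwise fun b b' => Disjoint (b • A) (b' • A) := by
  classical
  have hinj := injective_pow_iff_not_isOfFinOrder.2 ht
  refine ⟨(Finset.range m).image (t ^ ·), (Finset.card_image_of_injective _ hinj).trans
    (Finset.card_range m), ?_⟩
  have hpair : Pairwise fun i j : ℕ => Disjoint (t ^ i • A) (t ^ j • A) := by
    refine (Std.Symm.pairwise_on _).2 fun i j hij => ?_
    obtain ⟨d, rfl⟩ := Nat.exists_eq_add_of_lt hij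
    simpa only [add_assoc, pow_add, mul_smul, Set.disjoint_smul_set] using hA d
  rw [Finset.coe_image, hinj.injOn.pairwise_image]
  exact hpair.set_pairwise _

end Translates

section Ideals

variable {G : Type*} [Group G] {I : Set (Set G)}

theorem IsInvariantIdeal.compl_notMem (hI : IsInvariantIdeal G I) {A : Set G} (hA : A ∈ I) :
    Aᶜ ∉ I := fun hAc =>
  hI.proper <| Set.eq_univ_of_forall fun B => hI.subset_mem (hI.union_mem hA hAc) (by simp)

theorem Pack2Complete.mem_of_disjoint_pow_smul (hP : Pack2Complete I) (hI : ∅ ∈ I) {t : G}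
    (ht : ¬IsOfFinOrder t) {A : Set G} (hA : ∀ n : ℕ, Disjoint A (t ^ (n + 1) • A)) : A ∈ I := by
  refine hP A fun m => ?_
  obtain ⟨B, hcard, hB⟩ := exists_card_eq_pairwise_disjoint_pow_smul ht hA m
  refine ⟨B, hcard, fun b hb b' hb' hne => ?_⟩
  show b • A ∩ b' • A ∈ I
  rwa [(hB hb hb' hne).inter_eq]

theorem IsInvariantIdeal.not_pack2Complete (hI : IsInvariantIdeal G I) {α : Type*}
    {φ : FreeGroup α →* G} (hφ : Function.Injective φ) {i j : α} (hij : i ≠ j) :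
    ¬ Pack2Complete I := by
  classical
  intro hP
  obtain ⟨w, hw⟩ := φ.exists_map_mul_eq_mul hφ
  have hinf (k : α) : ¬IsOfFinOrder (φ (.of k)) :=
    hφ.isOfFinOrder_iff.not.2 (not_isOfFinOrder_of_isMulTorsionFree (FreeGroup.of_ne_one k))
  have hmem {S : Set (FreeGroup α)} {k : α} (hS : ∀ b, Disjoint S (FreeGroup.startsWith (k, b))) :
      w ⁻¹' S ∈ I :=
    hP.mem_of_disjoint_pow_smul hI.empty_mem (hinf k) fun n => by
      simpa only [map_pow] using
        disjoint_preimage_smul hw (FreeGroup.disjoint_of_pow_succ_smul hS n)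
  let A := FreeGroup.startsWith (i, true) ∪ FreeGroup.startsWith (i, false)
  have hA : w ⁻¹' A ∈ I := hmem (k := j) fun b => by simp [A, hij]
  have hAc : w ⁻¹' Aᶜ ∈ I := hmem (k := i) fun b =>
    Set.disjoint_compl_left_iff_subset.2 (by cases b <;> simp [A])
  exact hI.compl_notMem hA hAc

end Ideals

section SmallSets

variable {G : Type*} [Group G]

theorem IsLarge.mono {A B : Set G} (h : IsLarge A) (hAB : A ⊆ B) : IsLarge B :=
  let ⟨F, hF⟩ := h
  ⟨F, Set.eq_univ_of_univ_subset (hF ▸ Set.mul_subset_mul_left hAB)⟩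

theorem isLarge_univ : IsLarge (Set.univ : Set G) := ⟨{1}, by simp⟩

theorem not_isLarge_empty : ¬ IsLarge (∅ : Set G) := fun ⟨F, hF⟩ =>
  Set.empty_ne_univ (by simpa using hF)

theorem IsLarge.smul_set {A : Set G} (h : IsLarge A) (x : G) : IsLarge (x • A) := by
  classical
  obtain ⟨F, hF⟩ := h
  refine ⟨F * {x⁻¹}, ?_⟩
  rw [Finset.coe_mul, Finset.coe_singleton, mul_assoc, Set.singleton_mul]
  change (F : Set G) * (x⁻¹ • x • A) = _
  rw [inv_smul_smul, hF]

theorem isInvariantIdeal_isSmallSet : IsInvariantIdeal G {A | IsSmallSet A} where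
  proper h := by
    have hU : IsSmallSet (Set.univ : Set G) := Set.eq_univ_iff_forall.1 h _
    exact not_isLarge_empty (by simpa using hU _ isLarge_univ)
  empty_mem B hB := by simpa using hB
  subset_mem A B hA hBA L hL := (hA L hL).mono (Set.sdiff_subset_sdiff_right hBA)
  union_mem A B hA hB L hL := by simpa only [Set.sdiff_sdiff] using hB _ (hA L hL)
  translate_mem x A hA L hL := by
    show IsLarge (L \ x • A)
    simpa only [Set.smul_set_sdiff, smul_inv_smul] using (hA _ (hL.smul_set x⁻¹)).smul_set x

end SmallSets

/-- If a group `G` contains a subgroup isomorphic to the free group `F₂`, then no invariant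
ideal on `G` is `pack₂`-complete; in particular, the ideal `S` of small subsets of `G`
is not `pack₂`-complete. -/
theorem no_pack2_complete_ideal_of_free_subgroup {G : Type*} [Group G]
    (h : ∃ φ : FreeGroup (Fin 2) →* G, Function.Injective φ) :
    (∀ I : Set (Set G), IsInvariantIdeal G I → ¬ Pack2Complete I) ∧
    ¬ Pack2Complete {A : Set G | IsSmallSet A} := by
  obtain ⟨φ, hφ⟩ := h
  have h01 : (0 : Fin 2) ≠ 1 := by decide
  exact ⟨fun I hI => hI.not_pack2Complete hφ h01,
    isInvariantIdeal_isSmallSet.not_pack2Complete hφ h01⟩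
end
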